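/- Let S ⊂ ℝ² be 2n points in general position, and suppose there is an index such that a segment between two vertices p₁, p_i of conv(S) has exactly n−1 points of S on each side. Then S admits a partition into n parts, each of size 2, whose nerve is the star St_n with center {p₁, p_i}. -/

import Mathlib

/-!
Every point of `S` other than `p₁, p₂` lies strictly on one side of the line `p₁p₂`, so the
remaining points split into two halves `L` and `R` of `n - 1` points each. Match `L` with `R`
by a bijection of minimal total Euclidean length: if two matched segments crossed, exchanging
their partners would strictly shorten the matching (strict triangle inequality plus general
position), so the matched segments are pairwise disjoint. Each of them joins the two sides of the
line, so it meets the line in a point of `conv S`; since `p₁` and `p₂` are extreme points of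
`conv S`, that point lies on the segment `[p₁, p₂]`.
-/

open scoped Classical

/-- Signed area/orientation determinant in the plane. -/
def sideDet (p q x : Fin 2 → ℝ) : ℝ :=
  (q 0 - p 0) * (x 1 - p 1) - (q 1 - p 1) * (x 0 - p 0)

open Set Function Equiv AffineMap

def NoThreeCollinear (k : Type*) {V P : Type*} [DivisionRing k] [AddCommGroup V] [Module k V]
    [AddTorsor V P] (s : Set P) : Prop :=
  ∀ x ∈ s, ∀ y ∈ s, ∀ z ∈ s, x ≠ y → y ≠ z → x ≠ z → ¬ Collinear k ({x, y, z} : Set P)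

section Collinear

variable {k V₁ V₂ P₁ P₂ : Type*} [DivisionRing k] [AddCommGroup V₁] [Module k V₁]
  [AddTorsor V₁ P₁] [AddCommGroup V₂] [Module k V₂] [AddTorsor V₂ P₂]

theorem Collinear.map {s : Set P₁} (h : Collinear k s) (f : P₁ →ᵃ[k] P₂) :
    Collinear k (f '' s) := by
  rw [collinear_iff_exists_forall_eq_smul_vadd] at h ⊢
  obtain ⟨p₀, v, hv⟩ := h
  refine ⟨f p₀, f.linear v, ?_⟩
  rintro _ ⟨p, hp, rfl⟩
  obtain ⟨r, rfl⟩ := hv p hp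
  exact ⟨r, by simp⟩

theorem NoThreeCollinear.image {s : Set P₁} (hs : NoThreeCollinear k s) (e : P₁ ≃ᵃ[k] P₂) :
    NoThreeCollinear k (e '' s) := by
  rintro _ ⟨x, hx, rfl⟩ _ ⟨y, hy, rfl⟩ _ ⟨z, hz, rfl⟩ hxy hyz hxz hcol
  refine hs x hx y hy z hz (ne_of_apply_ne e hxy) (ne_of_apply_ne e hyz)
    (ne_of_apply_ne e hxz) ?_
  simpa [Set.image_insert_eq] using hcol.map e.symm.toAffineMap

end Collinear

theorem collinear_of_wbtw_of_wbtw {R V P : Type*} [Field R] [LinearOrder R]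
    [IsStrictOrderedRing R] [AddCommGroup V] [Module R V] [AddTorsor V P] {a b d x : P}
    (hb : Wbtw R a x b) (hd : Wbtw R a x d) (hxa : x ≠ a) : Collinear R ({a, b, d} : Set P) := by
  have hb' := hb.collinear.mem_affineSpan_of_mem_of_ne (p₃ := b) (by simp) (by simp) (by simp)
    hxa.symm
  have hd' := hd.collinear.mem_affineSpan_of_mem_of_ne (p₃ := d) (by simp) (by simp) (by simp)
    hxa.symm
  exact collinear_triple_of_mem_affineSpan_pair (left_mem_affineSpan_pair R a x) hb' hd'

theorem dist_add_dist_lt_of_wbtw {V P : Type*} [NormedAddCommGroup V] [NormedSpace ℝ V]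
    [StrictConvexSpace ℝ V] [MetricSpace P] [NormedAddTorsor V P] {a b c d x : P}
    (hab : Wbtw ℝ a x b) (hcd : Wbtw ℝ c x d) (hxa : x ≠ a)
    (habd : ¬ Collinear ℝ ({a, b, d} : Set P)) :
    dist a d + dist c b < dist a b + dist c d := by
  have had : dist a d < dist a x + dist x d :=
    dist_lt_dist_add_dist_iff.2 fun had => habd (collinear_of_wbtw_of_wbtw hab had hxa)
  linarith [dist_triangle c x b, hab.dist_add_dist, hcd.dist_add_dist]

theorem Fintype.sum_mul_swap_add {ι M : Type*} [Fintype ι] [DecidableEq ι] [AddCommGroup M]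
    (F : ι → ι → M) (σ : Perm ι) {i j : ι} (hij : i ≠ j) :
    ∑ k, F k ((σ * swap i j) k) + (F i (σ i) + F j (σ j)) =
      ∑ k, F k (σ k) + (F i (σ j) + F j (σ i)) := by
  have key : ∑ k, (F k ((σ * swap i j) k) - F k (σ k)) =
      (F i (σ j) - F i (σ i)) + (F j (σ i) - F j (σ j)) := by
    rw [Fintype.sum_eq_add i j hij fun k hk => by
      simp [swap_apply_of_ne_of_ne hk.1 hk.2]]
    simp
  rw [Finset.sum_sub_distrib] at key
  rw [eq_add_of_sub_eq key]
  abel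

theorem exists_perm_pairwise_disjoint_segment_of_strictConvexSpace {E ι : Type*}
    [NormedAddCommGroup E] [NormedSpace ℝ E] [StrictConvexSpace ℝ E] [Fintype ι] {T : Set E}
    (hT : NoThreeCollinear ℝ T) {f g : ι → E} (hfT : ∀ i, f i ∈ T) (hgT : ∀ i, g i ∈ T)
    (hf : Injective f) (hg : Injective g) (hfg : ∀ i j, f i ≠ g j) :
    ∃ σ : Perm ι, Pairwise (Disjoint on fun i => segment ℝ (f i) (g (σ i))) := by
  classical
  obtain ⟨σ, -, hσ⟩ := Finset.exists_min_image Finset.univ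
    (fun σ : Perm ι => ∑ i, dist (f i) (g (σ i))) ⟨1, Finset.mem_univ _⟩
  refine ⟨σ, fun i j hij => Set.disjoint_left.2 fun x hxi hxj => ?_⟩
  rw [mem_segment_iff_wbtw] at hxi hxj
  have hlt : dist (f i) (g (σ j)) + dist (f j) (g (σ i)) <
      dist (f i) (g (σ i)) + dist (f j) (g (σ j)) := by
    refine dist_add_dist_lt_of_wbtw hxi hxj ?_ ?_
    · rintro rfl
      exact hT _ (hfT j) _ (hfT i) _ (hgT _) (hf.ne hij.symm) (hfg _ _) (hfg _ _) hxj.collinear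
    · exact hT _ (hfT i) _ (hgT _) _ (hgT _) (hfg _ _) (hg.ne (σ.injective.ne hij)) (hfg _ _)
  -- exchanging the partners of `i` and `j` would give a shorter matching
  have hmin := hσ (σ * swap i j) (Finset.mem_univ _)
  have hcost := Fintype.sum_mul_swap_add (fun k l => dist (f k) (g l)) σ hij
  linarith

theorem exists_perm_pairwise_disjoint_segment {V ι : Type*} [AddCommGroup V] [Module ℝ V]
    [FiniteDimensional ℝ V] [Fintype ι] {T : Set V}
    (hT : NoThreeCollinear ℝ T) {f g : ι → V} (hfT : ∀ i, f i ∈ T) (hgT : ∀ i, g i ∈ T)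
    (hf : Injective f) (hg : Injective g) (hfg : ∀ i j, f i ≠ g j) :
    ∃ σ : Perm ι, Pairwise (Disjoint on fun i => segment ℝ (f i) (g (σ i))) := by
  let e : V ≃ₗ[ℝ] EuclideanSpace ℝ (Fin (Module.finrank ℝ V)) :=
    LinearEquiv.ofFinrankEq _ _ finrank_euclideanSpace_fin.symm
  obtain ⟨σ, hσ⟩ := exists_perm_pairwise_disjoint_segment_of_strictConvexSpace
    (hT.image e.toAffineEquiv) (fun i => mem_image_of_mem e (hfT i))
    (fun i => mem_image_of_mem e (hgT i)) (e.injective.comp hf) (e.injective.comp hg)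
    fun i j => e.injective.ne (hfg i j)
  refine ⟨σ, fun i j hij => ?_⟩
  have hseg : ∀ a b, e '' segment ℝ a b = segment ℝ (e a) (e b) :=
    image_segment ℝ e.toAffineMap
  rw [onFun, ← disjoint_image_iff e.injective, hseg, hseg]
  exact hσ hij

theorem nonneg_of_lineMap_mem_of_mem_extremePoints {V : Type*} [AddCommGroup V] [Module ℝ V]
    {K : Set V} {p q : V} (hp : p ∈ K.extremePoints ℝ) (hq : q ∈ K) (hpq : p ≠ q) {s : ℝ}
    (hs : lineMap p q s ∈ K) : 0 ≤ s := by
  by_contra! hs0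
  have h1s : 0 < 1 - s := by linarith
  suffices p ∈ openSegment ℝ (lineMap p q s) q from
    hpq ((mem_extremePoints.1 hp).2 _ hs _ hq this).2.symm
  rw [openSegment_eq_image_lineMap]
  refine ⟨-s / (1 - s), ⟨div_pos (by linarith) h1s, (div_lt_one h1s).2 (by linarith)⟩, ?_⟩
  simp only [lineMap_apply_module]
  match_scalars <;> field_simp <;> ring

theorem lineMap_mem_segment_of_mem_extremePoints {V : Type*} [AddCommGroup V] [Module ℝ V]
    {K : Set V} {p q : V} (hp : p ∈ K.extremePoints ℝ) (hq : q ∈ K.extremePoints ℝ)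
    (hpq : p ≠ q) {s : ℝ} (hs : lineMap p q s ∈ K) : lineMap p q s ∈ segment ℝ p q := by
  have hs' : lineMap q p (1 - s) ∈ K := by rwa [lineMap_apply_one_sub]
  refine lineMap_mem_segment ℝ p q ⟨nonneg_of_lineMap_mem_of_mem_extremePoints hp hq.1 hpq hs, ?_⟩
  linarith [nonneg_of_lineMap_mem_of_mem_extremePoints hq hp.1 hpq.symm hs']

@[simp]
theorem sideDet_self_left (p q : Fin 2 → ℝ) : sideDet p q p = 0 := by
  unfold sideDet; ring

@[simp]
theorem sideDet_self_right (p q : Fin 2 → ℝ) : sideDet p q q = 0 := by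
  unfold sideDet; ring

theorem sideDet_lineMap (p q a b : Fin 2 → ℝ) (t : ℝ) :
    sideDet p q (lineMap a b t) = (1 - t) * sideDet p q a + t * sideDet p q b := by
  simp only [sideDet, lineMap_apply_module, Pi.add_apply, Pi.smul_apply, smul_eq_mul]
  ring

theorem exists_lineMap_eq_of_sideDet_eq_zero {p q x : Fin 2 → ℝ} (hpq : p ≠ q)
    (h : sideDet p q x = 0) : ∃ s : ℝ, lineMap p q s = x := by
  unfold sideDet at h
  simp only [funext_iff, Fin.forall_fin_two, lineMap_apply_module', Pi.add_apply, Pi.smul_apply,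
    Pi.sub_apply, smul_eq_mul]
  by_cases h0 : q 0 - p 0 = 0
  · have h1 : q 1 - p 1 ≠ 0 := fun h1 =>
      hpq (funext <| Fin.forall_fin_two.2 ⟨by linarith, by linarith⟩)
    refine ⟨(x 1 - p 1) / (q 1 - p 1), ?_, ?_⟩ <;> field_simp
    · linear_combination h
    · ring
  · refine ⟨(x 0 - p 0) / (q 0 - p 0), ?_, ?_⟩ <;> field_simp
    · ring
    · linear_combination -h

theorem collinear_of_sideDet_eq_zero {p q x : Fin 2 → ℝ} (hpq : p ≠ q) (h : sideDet p q x = 0) :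
    Collinear ℝ ({x, p, q} : Set (Fin 2 → ℝ)) := by
  obtain ⟨s, rfl⟩ := exists_lineMap_eq_of_sideDet_eq_zero hpq h
  exact collinear_insert_of_mem_affineSpan_pair (lineMap_mem_affineSpan_pair s p q)

theorem exists_mem_segment_sideDet_eq_zero {p q l r : Fin 2 → ℝ} (hl : 0 < sideDet p q l)
    (hr : sideDet p q r < 0) : ∃ y ∈ segment ℝ l r, sideDet p q y = 0 := by
  have hlr : 0 < sideDet p q l - sideDet p q r := by linarith
  refine ⟨lineMap l r (sideDet p q l / (sideDet p q l - sideDet p q r)),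
    lineMap_mem_segment ℝ l r ⟨by positivity, (div_le_one hlr).2 (by linarith)⟩, ?_⟩
  rw [sideDet_lineMap]
  field_simp
  ring

theorem Finset.exists_injective_range_eq {α : Type*} (s : Finset α) {m : ℕ} (hs : s.card = m) :
    ∃ f : Fin m → α, Injective f ∧ Set.range f = s := by
  refine ⟨(↑) ∘ (s.equivFinOfCardEq hs).symm, Subtype.val_injective.comp (Equiv.injective _), ?_⟩
  rw [range_comp, EquivLike.range_eq_univ, image_univ, Subtype.range_coe]

section Pairs

variable {ι α : Type*} [DecidableEq α] {u v : ι → α}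

theorem pairwise_disjoint_pair_of_injective_sumElim (h : Injective (Sum.elim u v)) :
    Pairwise (Disjoint on fun i => ({u i, v i} : Finset α)) := by
  obtain ⟨hu, hv, huv⟩ := Sum.elim_injective.1 h
  intro i j hij
  simp [onFun, hu.ne hij.symm, hv.ne hij.symm, huv, (huv _ _).symm]

theorem coe_biUnion_pair [Fintype ι] (u v : ι → α) :
    ((Finset.univ.biUnion fun i => ({u i, v i} : Finset α)) : Set α) = range u ∪ range v := by
  ext x
  simp [exists_or, eq_comm]

end Pairs

theorem segment_inter_segment_nonempty_of_sideDet {K : Set (Fin 2 → ℝ)} (hK : Convex ℝ K)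
    {p q l r : Fin 2 → ℝ} (hp : p ∈ K.extremePoints ℝ) (hq : q ∈ K.extremePoints ℝ) (hpq : p ≠ q)
    (hlK : l ∈ K) (hrK : r ∈ K) (hl : 0 < sideDet p q l) (hr : sideDet p q r < 0) :
    (segment ℝ p q ∩ segment ℝ l r).Nonempty := by
  obtain ⟨y, hy, hy0⟩ := exists_mem_segment_sideDet_eq_zero hl hr
  obtain ⟨s, rfl⟩ := exists_lineMap_eq_of_sideDet_eq_zero hpq hy0
  exact ⟨_, lineMap_mem_segment_of_mem_extremePoints hp hq hpq (hK.segment_subset hlK hrK hy), hy⟩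

section Halving

variable {S : Finset (Fin 2 → ℝ)} {p q : Fin 2 → ℝ}

theorem coe_eq_union_sideDet (hS : NoThreeCollinear ℝ (S : Set (Fin 2 → ℝ))) (hp : p ∈ S)
    (hq : q ∈ S) (hpq : p ≠ q) :
    (S : Set (Fin 2 → ℝ)) =
      insert p {x | x ∈ S ∧ 0 < sideDet p q x} ∪ insert q {x | x ∈ S ∧ sideDet p q x < 0} := by
  ext x
  simp only [mem_union, mem_insert_iff, mem_ofPred_eq, Finset.mem_coe]
  constructor
  · intro hx
    by_cases hxp : x = p; · exact .inl (.inl hxp)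
    by_cases hxq : x = q; · exact .inr (.inl hxq)
    have hx0 : sideDet p q x ≠ 0 := fun h =>
      hS x hx p hp q hq hxp hpq hxq (collinear_of_sideDet_eq_zero hpq h)
    rcases hx0.lt_or_gt with h | h <;> tauto
  · rintro ((rfl | ⟨hx, -⟩) | (rfl | ⟨hx, -⟩)) <;> assumption

theorem exists_matching_of_sideDet (hS : NoThreeCollinear ℝ (S : Set (Fin 2 → ℝ))) (hp : p ∈ S)
    (hq : q ∈ S) (hpq : p ≠ q) {m : ℕ}
    (hleft : (S.filter fun x => 0 < sideDet p q x).card = m)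
    (hright : (S.filter fun x => sideDet p q x < 0).card = m) :
    ∃ f g : Fin m → Fin 2 → ℝ, Injective f ∧ Injective g ∧
      (∀ k, f k ∈ S ∧ 0 < sideDet p q (f k)) ∧ (∀ k, g k ∈ S ∧ sideDet p q (g k) < 0) ∧
      (S : Set (Fin 2 → ℝ)) = insert p (range f) ∪ insert q (range g) ∧
      Pairwise (Disjoint on fun k => segment ℝ (f k) (g k)) := by
  obtain ⟨f, hf, hfL⟩ := Finset.exists_injective_range_eq _ hleft
  obtain ⟨g, hg, hgR⟩ := Finset.exists_injective_range_eq _ hright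
  simp only [Finset.coe_filter] at hfL hgR
  have hfS : ∀ k, f k ∈ S ∧ 0 < sideDet p q (f k) := fun k => hfL.subset (mem_range_self k)
  have hgS : ∀ k, g k ∈ S ∧ sideDet p q (g k) < 0 := fun k => hgR.subset (mem_range_self k)
  obtain ⟨σ, hσ⟩ := exists_perm_pairwise_disjoint_segment hS (fun k => (hfS k).1)
    (fun k => (hgS k).1) hf hg fun k l h => lt_asymm (hgS l).2 (h ▸ (hfS k).2)
  refine ⟨f, g ∘ σ, hf, hg.comp σ.injective, hfS, fun k => hgS (σ k), ?_, hσ⟩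
  rw [EquivLike.range_comp, hfL, hgR]
  exact coe_eq_union_sideDet hS hp hq hpq

theorem injective_sumElim_cons_of_sideDet (hpq : p ≠ q) {m : ℕ} {f g : Fin m → Fin 2 → ℝ}
    (hf : Injective f) (hg : Injective g) (hfpos : ∀ k, 0 < sideDet p q (f k))
    (hgneg : ∀ k, sideDet p q (g k) < 0) :
    Injective (Sum.elim (Fin.cons p f : Fin (m + 1) → Fin 2 → ℝ) (Fin.cons q g)) := by
  refine Sum.elim_injective.2
    ⟨Fin.cons_injective_iff.2 ⟨?_, hf⟩, Fin.cons_injective_iff.2 ⟨?_, hg⟩, ?_⟩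
  · rintro ⟨k, hk⟩
    simpa [hk] using hfpos k
  · rintro ⟨k, hk⟩
    simpa [hk] using hgneg k
  · intro i j
    cases i using Fin.cases <;> cases j using Fin.cases
    · exact hpq
    · exact fun h : p = g _ => (hgneg _).ne (by rw [← h, sideDet_self_left])
    · exact fun h : f _ = q => (hfpos _).ne' (by rw [h, sideDet_self_right])
    · exact fun h : f _ = g _ => lt_asymm (hgneg _) (h ▸ hfpos _)

end Halving

theorem star_case_halving_segment_general
    {n : ℕ} (hn : 0 < n)
    (S : Finset (Fin 2 → ℝ))
    -- general position: no three points collinear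
    (hgen : ∀ x ∈ S, ∀ y ∈ S, ∀ z ∈ S, x ≠ y → y ≠ z → x ≠ z →
      ¬ Collinear ℝ ({x, y, z} : Set (Fin 2 → ℝ)))
    (p₁ p₂ : Fin 2 → ℝ) (hp₁ : p₁ ∈ S) (hp₂ : p₂ ∈ S) (hne : p₁ ≠ p₂)
    (hext₁ : p₁ ∈ Set.extremePoints ℝ (convexHull ℝ (S : Set (Fin 2 → ℝ))))
    (hext₂ : p₂ ∈ Set.extremePoints ℝ (convexHull ℝ (S : Set (Fin 2 → ℝ))))
    -- exactly n-1 points of S on each open side of the line through p₁, p₂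
    (hleft : (S.filter (fun x => 0 < sideDet p₁ p₂ x)).card = n - 1)
    (hright : (S.filter (fun x => sideDet p₁ p₂ x < 0)).card = n - 1) :
    ∃ P : Fin n → Finset (Fin 2 → ℝ),
      (∀ i, (P i).card = 2) ∧
      (∀ i j, i ≠ j → Disjoint (P i) (P j)) ∧
      S = Finset.univ.biUnion P ∧
      P ⟨0, hn⟩ = {p₁, p₂} ∧
      (∀ i, i ≠ (⟨0, hn⟩ : Fin n) →
        (convexHull ℝ (P ⟨0, hn⟩ : Set (Fin 2 → ℝ)) ∩
          convexHull ℝ (P i : Set (Fin 2 → ℝ))).Nonempty) ∧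
      (∀ i j, i ≠ (⟨0, hn⟩ : Fin n) → j ≠ (⟨0, hn⟩ : Fin n) → i ≠ j →
        convexHull ℝ (P i : Set (Fin 2 → ℝ)) ∩
          convexHull ℝ (P j : Set (Fin 2 → ℝ)) = ∅) := by
  obtain ⟨m, rfl⟩ : ∃ m, n = m + 1 := ⟨n - 1, by omega⟩
  rw [Nat.add_sub_cancel] at hleft hright
  obtain ⟨f, g, hf, hg, hfS, hgS, hS, hfg⟩ :=
    exists_matching_of_sideDet hgen hp₁ hp₂ hne hleft hright
  let u : Fin (m + 1) → Fin 2 → ℝ := Fin.cons p₁ f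
  let v : Fin (m + 1) → Fin 2 → ℝ := Fin.cons p₂ g
  have hinj : Injective (Sum.elim u v) :=
    injective_sumElim_cons_of_sideDet hne hf hg (fun k => (hfS k).2) fun k => (hgS k).2
  refine ⟨fun i => {u i, v i},
    fun i => Finset.card_pair (hinj.ne Sum.inl_ne_inr),
    fun i j hij => pairwise_disjoint_pair_of_injective_sumElim hinj hij, ?_, rfl, ?_, ?_⟩
  · rw [← Finset.coe_inj, coe_biUnion_pair, Fin.range_cons, Fin.range_cons, hS]
  · intro i hi
    obtain ⟨k, rfl⟩ := Fin.exists_succ_eq.2 hi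
    simp only [u, v, Finset.coe_pair, convexHull_pair, Fin.cons_succ]
    exact segment_inter_segment_nonempty_of_sideDet (convex_convexHull ℝ _) hext₁ hext₂ hne
      (subset_convexHull ℝ _ (hfS k).1) (subset_convexHull ℝ _ (hgS k).1) (hfS k).2 (hgS k).2
  · intro i j hi hj hij
    obtain ⟨k, rfl⟩ := Fin.exists_succ_eq.2 hi
    obtain ⟨l, rfl⟩ := Fin.exists_succ_eq.2 hj
    simp only [u, v, Finset.coe_pair, convexHull_pair, Fin.cons_succ,
      ← disjoint_iff_inter_eq_empty]
    exact hfg ((Fin.succ_injective _).ne_iff.1 hij)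

/-- Let `S ⊂ ℝ²` be `2n` points in general position and suppose `p₁, p₂` are
extreme points of `conv(S)` such that the line through them leaves exactly `n-1` points of
`S` on each side. Then `S` has a partition into `n` pairs whose nerve is the star with
center `{p₁, p₂}`. -/
theorem star_case_halving_segment
    {n : ℕ} (hn : 0 < n)
    (S : Finset (Fin 2 → ℝ)) (hcard : S.card = 2 * n)
    -- general position: no three points collinear
    (hgen : ∀ x ∈ S, ∀ y ∈ S, ∀ z ∈ S, x ≠ y → y ≠ z → x ≠ z →
      ¬ Collinear ℝ ({x, y, z} : Set (Fin 2 → ℝ)))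
    (p₁ p₂ : Fin 2 → ℝ) (hp₁ : p₁ ∈ S) (hp₂ : p₂ ∈ S) (hne : p₁ ≠ p₂)
    (hext₁ : p₁ ∈ Set.extremePoints ℝ (convexHull ℝ (S : Set (Fin 2 → ℝ))))
    (hext₂ : p₂ ∈ Set.extremePoints ℝ (convexHull ℝ (S : Set (Fin 2 → ℝ))))
    -- exactly n-1 points of S on each open side of the line through p₁, p₂
    (hleft : (S.filter (fun x => 0 < sideDet p₁ p₂ x)).card = n - 1)
    (hright : (S.filter (fun x => sideDet p₁ p₂ x < 0)).card = n - 1) :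
    ∃ P : Fin n → Finset (Fin 2 → ℝ),
      (∀ i, (P i).card = 2) ∧
      (∀ i j, i ≠ j → Disjoint (P i) (P j)) ∧
      S = Finset.univ.biUnion P ∧
      P ⟨0, hn⟩ = {p₁, p₂} ∧
      (∀ i, i ≠ (⟨0, hn⟩ : Fin n) →
        (convexHull ℝ (P ⟨0, hn⟩ : Set (Fin 2 → ℝ)) ∩
          convexHull ℝ (P i : Set (Fin 2 → ℝ))).Nonempty) ∧
      (∀ i j, i ≠ (⟨0, hn⟩ : Fin n) → j ≠ (⟨0, hn⟩ : Fin n) → i ≠ j →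
        convexHull ℝ (P i : Set (Fin 2 → ℝ)) ∩
          convexHull ℝ (P j : Set (Fin 2 → ℝ)) = ∅) :=
  star_case_halving_segment_general hn S hgen p₁ p₂ hp₁ hp₂ hne hext₁ hext₂ hleft hright
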